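/- Let S be a semigroup with finite R-height and let B be a bi-ideal of S. Then H_R(B) ≤ 3·H_R(S) − 1. -/
import Mathlib


/-!
Common definitions: Green's preorder/relation computed inside a subsemigroup,
chains of R-classes, R-height, bi-ideals, one- and two-sided ideals,
the kernel, and completely simple (sub)semigroups.
-/

variable {S : Type*}

/-- Green's preorder `≤_B` computed with multipliers from `B`:
`a ≤_B b` iff `a ∈ bB¹`, i.e. `a = b` or `a = b*s` for some `s ∈ B`. -/
def RLe [Semigroup S] (B : Set S) (a b : S) : Prop :=
  a = b ∨ ∃ s ∈ B, a = b * s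

/-- The strict version `<_B` of Green's preorder. -/
def RLt [Semigroup S] (B : Set S) (a b : S) : Prop :=
  RLe B a b ∧ ¬ RLe B b a

/-- Green's relation `R` computed with multipliers from `B`. -/
def REquiv [Semigroup S] (B : Set S) (a b : S) : Prop :=
  RLe B a b ∧ RLe B b a

/-- There is a chain of `n` (distinct, linearly ordered) `R`-classes of the
subsemigroup `B`, with all representatives lying in `C`. -/
def HasRChain [Semigroup S] (B C : Set S) (n : ℕ) : Prop :=
  ∃ f : Fin n → S, (∀ i, f i ∈ C) ∧ ∀ i j : Fin n, i < j → RLt B (f i) (f j)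

/-- There is a chain of `n` `R`-classes of `S`, each of which is contained in `C`. -/
def HasRChainInside [Semigroup S] (C : Set S) (n : ℕ) : Prop :=
  ∃ f : Fin n → S, (∀ i, ∀ x : S, REquiv Set.univ x (f i) → x ∈ C) ∧
    ∀ i j : Fin n, i < j → RLt (Set.univ : Set S) (f i) (f j)

/-- The `R`-height of the subsemigroup `B`: the supremum of the lengths
(cardinalities) of chains of `R_B`-classes. -/
noncomputable def RHeight [Semigroup S] (B : Set S) : ℕ∞ :=
  sSup ((fun n : ℕ => (n : ℕ∞)) '' {n : ℕ | HasRChain B B n})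

/-- A bi-ideal of `S`: a nonempty subset `B` with `BS¹B ⊆ B`. -/
def IsBiIdeal [Semigroup S] (B : Set S) : Prop :=
  B.Nonempty ∧ ∀ b ∈ B, ∀ c ∈ B, b * c ∈ B ∧ ∀ s : S, b * s * c ∈ B

/-- A right ideal of `S`: a nonempty subset `A` with `AS ⊆ A`. -/
def IsRightIdeal [Semigroup S] (A : Set S) : Prop :=
  A.Nonempty ∧ ∀ a ∈ A, ∀ s : S, a * s ∈ A

/-- A left ideal of `S`: a nonempty subset `A` with `SA ⊆ A`. -/
def IsLeftIdeal [Semigroup S] (A : Set S) : Prop :=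
  A.Nonempty ∧ ∀ a ∈ A, ∀ s : S, s * a ∈ A

/-- A two-sided ideal of `S`. -/
def IsTwoSidedIdealSet [Semigroup S] (A : Set S) : Prop :=
  IsRightIdeal A ∧ IsLeftIdeal A

/-- `K` is the kernel (minimum two-sided ideal) of `S`. -/
def IsKernel [Semigroup S] (K : Set S) : Prop :=
  IsTwoSidedIdealSet K ∧ ∀ A : Set S, IsTwoSidedIdealSet A → K ⊆ A

/-- A right ideal of the subsemigroup `K` of `S`. -/
def IsRightIdealIn [Semigroup S] (K A : Set S) : Prop :=
  A.Nonempty ∧ A ⊆ K ∧ ∀ a ∈ A, ∀ k ∈ K, a * k ∈ A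

/-- A left ideal of the subsemigroup `K` of `S`. -/
def IsLeftIdealIn [Semigroup S] (K A : Set S) : Prop :=
  A.Nonempty ∧ A ⊆ K ∧ ∀ a ∈ A, ∀ k ∈ K, k * a ∈ A

/-- A two-sided ideal of the subsemigroup `K` of `S`. -/
def IsIdealIn [Semigroup S] (K A : Set S) : Prop :=
  IsRightIdealIn K A ∧ IsLeftIdealIn K A

/-- The subsemigroup `K` of `S` is completely simple: it is simple (has no
proper two-sided ideals) and possesses both a minimal right ideal and a
minimal left ideal. -/
def IsCompletelySimple [Semigroup S] (K : Set S) : Prop :=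
  K.Nonempty ∧ (∀ a ∈ K, ∀ b ∈ K, a * b ∈ K) ∧
  (∀ A : Set S, IsIdealIn K A → A = K) ∧
  (∃ A : Set S, IsRightIdealIn K A ∧ ∀ A' : Set S, IsRightIdealIn K A' → A' ⊆ A → A' = A) ∧
  (∃ A : Set S, IsLeftIdealIn K A ∧ ∀ A' : Set S, IsLeftIdealIn K A' → A' ⊆ A → A' = A)

section Aux

variable [Semigroup S]

private lemma rle_refl' (B : Set S) (a : S) : RLe B a a := Or.inl rfl

private lemma rle_trans' {B : Set S} (hcl : ∀ a ∈ B, ∀ b ∈ B, a * b ∈ B)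
    {a b c : S} (h1 : RLe B a b) (h2 : RLe B b c) : RLe B a c := by
  rcases h1 with rfl | ⟨s, hs, rfl⟩
  · exact h2
  · rcases h2 with rfl | ⟨t, ht, rfl⟩
    · exact Or.inr ⟨s, hs, rfl⟩
    · exact Or.inr ⟨t * s, hcl t ht s hs, mul_assoc c t s⟩

private lemma rle_univ_trans {a b c : S} (h1 : RLe (Set.univ : Set S) a b)
    (h2 : RLe (Set.univ : Set S) b c) : RLe (Set.univ : Set S) a c :=
  rle_trans' (fun _ _ _ _ => Set.mem_univ _) h1 h2

private lemma rle_mono {B : Set S} {a b : S} (h : RLe B a b) :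
    RLe (Set.univ : Set S) a b := by
  rcases h with rfl | ⟨s, _, rfl⟩
  · exact Or.inl rfl
  · exact Or.inr ⟨s, Set.mem_univ _, rfl⟩

private lemma rlt_mul {B : Set S} {a b : S} (h : RLt B a b) :
    ∃ s ∈ B, a = b * s := by
  rcases h.1 with rfl | hs
  · exact absurd (rle_refl' B a) h.2
  · exact hs

/-- Four strictly `<_B`-ordered elements cannot have the extremes `R_S`-comparable
downwards. -/
private lemma four_lemma {B : Set S} (hB : IsBiIdeal B) {x y z w : S}
    (h1 : RLt B x y) (h2 : RLt B y z) (h3 : RLt B z w)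
    (h4 : RLe (Set.univ : Set S) w x) : False := by
  obtain ⟨a, ha, hxa⟩ := rlt_mul h1
  obtain ⟨c, hc, hzc⟩ := rlt_mul h3
  rcases h4 with rfl | ⟨s, -, hws⟩
  · -- w = x : then z = x * c ≤_B x ≤_B y
    exact h2.2 (rle_trans' (fun a ha b hb => (hB.2 a ha b hb).1)
      (Or.inr ⟨c, hc, hzc⟩) h1.1)
  · -- w = x * s : z = y * (a*s*c)
    refine h2.2 (Or.inr ⟨a * s * c, (hB.2 a ha c hc).2 s, ?_⟩)
    rw [hzc, hws, hxa]
    simp [mul_assoc]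

/-- If `x <_B y <_B z` all lie in one `R_S`-class, then there is an element of `S`
strictly `R_S`-below `x`. -/
private lemma bottom_lemma {B : Set S} (hB : IsBiIdeal B) {x y z : S}
    (h1 : RLt B x y) (h2 : RLt B y z)
    (h3 : RLe (Set.univ : Set S) z x) :
    ∃ w : S, RLt (Set.univ : Set S) w x := by
  by_contra hno
  push_neg at hno
  obtain ⟨b, hb, hyb⟩ := rlt_mul h2
  rcases h3 with rfl | ⟨s, -, hzs⟩
  · -- z = x : then y = x * b ≤_B x, contradicting x <_B y
    exact h1.2 (Or.inr ⟨b, hb, hyb⟩)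
  · -- z = x * s
    have hle : RLe (Set.univ : Set S) x (x * b) := by
      have := hno (x * b)
      rw [RLt] at this
      by_contra hxb
      exact hxb (not_not.mp (fun hc => (this ⟨Or.inr ⟨b, Set.mem_univ _, rfl⟩, hc⟩)))
    rcases hle with he | ⟨v, -, hv⟩
    · -- x = x * b : y = x * (b*s*b)
      refine h1.2 (Or.inr ⟨b * s * b, (hB.2 b hb b hb).2 s, ?_⟩)
      rw [hyb, hzs]
      calc x * s * b = x * b * s * b := by rw [← he]
        _ = x * (b * s * b) := by simp [mul_assoc]
    · -- x = (x * b) * v : y = x * (b*(v*s)*b)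
      refine h1.2 (Or.inr ⟨b * (v * s) * b, (hB.2 b hb b hb).2 (v * s), ?_⟩)
      rw [hyb, hzs]
      calc x * s * b = x * b * v * s * b := by rw [← hv]
        _ = x * (b * (v * s) * b) := by simp [mul_assoc]

end Aux

/-- If `S` has finite `R`-height and `B` is a bi-ideal of `S`, then
`H_R(B) ≤ 3·H_R(S) - 1`. -/
theorem biideal_rheight_le_three_mul_sub_one {S : Type*} [Semigroup S]
    (hfin : RHeight (Set.univ : Set S) ≠ ⊤)
    {B : Set S} (hB : IsBiIdeal B) :
    RHeight B ≤ 3 * RHeight (Set.univ : Set S) - 1 := by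
  -- Get the finite height `h` of `S`.
  obtain ⟨h, hh⟩ : ∃ h : ℕ, RHeight (Set.univ : Set S) = (h : ℕ∞) := by
    cases hH : RHeight (Set.univ : Set S) with
    | top => exact absurd hH hfin
    | coe h => exact ⟨h, rfl⟩
  have hub : ∀ k : ℕ, HasRChain (Set.univ : Set S) (Set.univ : Set S) k → k ≤ h := by
    intro k hk
    have : (k : ℕ∞) ≤ RHeight (Set.univ : Set S) :=
      le_sSup ⟨k, hk, rfl⟩
    rw [hh] at this
    exact_mod_cast this
  -- `S` is nonempty, so `h ≥ 1`.
  obtain ⟨b0, hb0⟩ := hB.1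
  have h1 : 1 ≤ h := by
    refine hub 1 ⟨fun _ => b0, fun _ => Set.mem_univ _, ?_⟩
    intro i j hij
    have hi := i.isLt
    have hj := j.isLt
    exact absurd (Fin.lt_def.mp hij) (by omega)
  -- Key bound: any `<_B`-chain has length at most `3h - 1`.
  have key : ∀ n : ℕ, HasRChain B B n → n ≤ 3 * h - 1 := by
    intro n hn
    by_contra hlt
    push_neg at hlt
    have hn3 : 3 * h ≤ n := by omega
    obtain ⟨f, hfB, hf⟩ := hn
    have hn0 : 0 < n := by omega
    set F : ℕ → S := fun i => f ⟨i % n, Nat.mod_lt _ hn0⟩ with hFdef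
    have hF : ∀ i j : ℕ, i < j → j < n → RLt B (F i) (F j) := by
      intro i j hij hj
      have hi : i < n := lt_trans hij hj
      have := hf ⟨i % n, Nat.mod_lt _ hn0⟩ ⟨j % n, Nat.mod_lt _ hn0⟩
        (by simp [Fin.lt_def, Nat.mod_eq_of_lt hi, Nat.mod_eq_of_lt hj, hij])
      exact this
    -- `R_S`-strictness across a gap of at least 3.
    have hS : ∀ i j : ℕ, i + 3 ≤ j → j < n → RLt (Set.univ : Set S) (F i) (F j) := by
      intro i j hgap hj
      refine ⟨rle_mono (hF i j (by omega) hj).1, ?_⟩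
      intro hji
      exact four_lemma hB (hF i (i + 1) (by omega) (by omega))
        (hF (i + 1) (i + 2) (by omega) (by omega))
        (hF (i + 2) j (by omega) hj) hji
    -- We build a strict `R_S`-chain of length `h + 1`, a contradiction.
    have hcontra : HasRChain (Set.univ : Set S) (Set.univ : Set S) (h + 1) := by
      by_cases hc : RLe (Set.univ : Set S) (F 2) (F 0)
      · -- Case A : `F 0, F 1, F 2` lie in one `R_S`-class; get `w` strictly below.
        obtain ⟨w, hw⟩ := bottom_lemma hB (hF 0 1 (by omega) (by omega))
          (hF 1 2 (by omega) (by omega)) hc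
        refine ⟨fun j => if j.val = 0 then w else F (3 * (j.val - 1)),
          fun _ => Set.mem_univ _, ?_⟩
        intro i j hij
        have hi := i.isLt
        have hj := j.isLt
        have hij' : i.val < j.val := Fin.lt_def.mp hij
        by_cases hi0 : i.val = 0
        · have hj0 : j.val ≠ 0 := by omega
          simp only [hi0, if_pos rfl, if_neg hj0]
          by_cases hj1 : j.val = 1
          · simpa [hj1] using hw
          · have hgap : 0 + 3 ≤ 3 * (j.val - 1) := by omega
            have hjn : 3 * (j.val - 1) < n := by omega
            refine ⟨rle_univ_trans hw.1 (hS 0 _ hgap hjn).1, ?_⟩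
            intro hle
            exact (hS 0 _ hgap hjn).2 (rle_univ_trans hle hw.1)
        · have hj0 : j.val ≠ 0 := by omega
          simp only [if_neg hi0, if_neg hj0]
          exact hS _ _ (by omega) (by omega)
      · -- Case B : `F 0 <_S F 2`; use `F 0, F 2, F 5, F 8, …`.
        refine ⟨fun j => if j.val = 0 then F 0 else F (3 * (j.val - 1) + 2),
          fun _ => Set.mem_univ _, ?_⟩
        intro i j hij
        have hi := i.isLt
        have hj := j.isLt
        have hij' : i.val < j.val := Fin.lt_def.mp hij
        by_cases hi0 : i.val = 0
        · have hj0 : j.val ≠ 0 := by omega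
          simp only [hi0, if_pos rfl, if_neg hj0]
          by_cases hj1 : j.val = 1
          · simp only [hj1]
            exact ⟨rle_mono (hF 0 2 (by omega) (by omega)).1, hc⟩
          · exact hS 0 _ (by omega) (by omega)
        · have hj0 : j.val ≠ 0 := by omega
          simp only [if_neg hi0, if_neg hj0]
          exact hS _ _ (by omega) (by omega)
    have := hub (h + 1) hcontra
    omega
  -- Conclude in `ℕ∞`.
  rw [hh]
  refine sSup_le ?_
  rintro x ⟨m, hm, rfl⟩
  have hm' : m ≤ 3 * h - 1 := key m hm
  calc (m : ℕ∞) ≤ ((3 * h - 1 : ℕ) : ℕ∞) := by exact_mod_cast hm'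
    _ = 3 * (h : ℕ∞) - 1 := by
        rw [ENat.coe_sub]
        push_cast
        ring_nf
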